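/- arXiv:0805.0869 — 3 statements merged into one kernel-verified Lean document; each statement's English description precedes it below -/
import Mathlib

section
/- Let U_t ∈ SU(2) solve the stochastic Schrödinger equation i dU_t = H(t)U_t dt, and write U_t = u(χ_t, φ_t, ψ_t) in the given parametrisation of SU(2). Then U_t solves this equation if and only if the coordinates satisfy the system dχ_t = κ[X_t sin φ_t + Y_t cos φ_t] dt, dφ_t = (1 + (2κ/tan 2χ_t)[X_t cos φ_t − Y_t sin φ_t]) dt, dψ_t = −(κ/sin 2χ_t)[X_t cos φ_t − Y_t sin φ_t] dt. -/
/-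
Since `det u = 1`, the equation `U' = -i H U` is equivalent to `U' adj(U) = -i H`. Both sides have
the form `!![-i a, b; -conj b, i a]` with `a` real; for `U' adj(U)` in the coordinates,
`a = φ'/2 + cos 2χ · ψ'` and `b = e^{-iφ} (χ' + i sin 2χ · ψ')`. Comparing `a` and `b` gives a linear
system in `(χ', φ', ψ')` with determinant `sin 2χ`, nonzero for `χ ∈ (0, π/2)`, and solving it
yields the coordinate equations.
-/

open Real

noncomputable section

/-- The parametrisation `u(χ,φ,ψ)` of `SU(2)`. -/
def uMat (χ φ ψ : ℝ) : Matrix (Fin 2) (Fin 2) ℂ :=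
  !![(Real.cos χ : ℂ) * Complex.exp (-Complex.I * ((φ : ℂ) / 2 + (ψ : ℂ))),
     (Real.sin χ : ℂ) * Complex.exp (-Complex.I * ((φ : ℂ) / 2 - (ψ : ℂ)));
     -(Real.sin χ : ℂ) * Complex.exp (Complex.I * ((φ : ℂ) / 2 - (ψ : ℂ))),
     (Real.cos χ : ℂ) * Complex.exp (Complex.I * ((φ : ℂ) / 2 + (ψ : ℂ)))]

/-- The Hamiltonian `H = H₀ + κV` with `H₀ = diag(1/2, −1/2)` and
`V` off-diagonal with entries `Z = X + iY` and `conj Z`. -/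
def Hmat (κ X Y : ℝ) : Matrix (Fin 2) (Fin 2) ℂ :=
  !![(1 : ℂ) / 2, (κ : ℂ) * ((X : ℂ) + Complex.I * (Y : ℂ));
     (κ : ℂ) * ((X : ℂ) - Complex.I * (Y : ℂ)), -((1 : ℂ) / 2)]

lemma Complex.exp_I_mul_eq_inv (z : ℂ) :
    Complex.exp (Complex.I * z) = (Complex.exp (-Complex.I * z))⁻¹ := by
  rw [← Complex.exp_neg, neg_mul, neg_neg]

theorem eq_mul_iff_mul_adjugate_eq {n R : Type*} [Fintype n] [DecidableEq n] [CommRing R]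
    {U D A : Matrix n n R} (hU : U.det = 1) : D = A * U ↔ D * U.adjugate = A := by
  constructor
  · rintro rfl
    rw [mul_assoc, Matrix.mul_adjugate, hU, one_smul, mul_one]
  · rintro rfl
    rw [mul_assoc, Matrix.adjugate_mul, hU, one_smul, mul_one]

lemma HasDerivAt.mul_cexp_const_mul {f g : ℝ → ℂ} {f' g' : ℂ} {t : ℝ} (c : ℂ)
    (hf : HasDerivAt f f' t) (hg : HasDerivAt g g' t) :
    HasDerivAt (fun s => f s * Complex.exp (c * g s))
      ((f' + f t * c * g') * Complex.exp (c * g t)) t :=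
  (hf.mul (hg.const_mul c).cexp).congr_deriv (by ring)

theorem HasDerivAt.hasDerivAt_iff_eq {𝕜 F : Type*} [NontriviallyNormedField 𝕜]
    [NormedAddCommGroup F] [NormedSpace 𝕜 F] {f : 𝕜 → F} {f' g : F} {x : 𝕜}
    (hf : HasDerivAt f f' x) : HasDerivAt f g x ↔ f' = g :=
  ⟨hf.unique, fun h => h ▸ hf⟩

lemma det_uMat (χ φ ψ : ℝ) : (uMat χ φ ψ).det = 1 := by
  simp only [uMat, Complex.exp_I_mul_eq_inv, Matrix.det_fin_two_of]
  field_simp [Complex.exp_ne_zero]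
  rw [sub_neg_eq_add]
  exact_mod_cast Real.cos_sq_add_sin_sq χ

def uMatDeriv (χ φ ψ χ' φ' ψ' : ℝ) : Matrix (Fin 2) (Fin 2) ℂ :=
  !![(-(Real.sin χ * χ' : ℂ) - Complex.I * Real.cos χ * (φ' / 2 + ψ')) *
        Complex.exp (-Complex.I * ((φ : ℂ) / 2 + ψ)),
     ((Real.cos χ * χ' : ℂ) - Complex.I * Real.sin χ * (φ' / 2 - ψ')) *
        Complex.exp (-Complex.I * ((φ : ℂ) / 2 - ψ));
     (-(Real.cos χ * χ' : ℂ) - Complex.I * Real.sin χ * (φ' / 2 - ψ')) *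
        Complex.exp (Complex.I * ((φ : ℂ) / 2 - ψ)),
     (-(Real.sin χ * χ' : ℂ) + Complex.I * Real.cos χ * (φ' / 2 + ψ')) *
        Complex.exp (Complex.I * ((φ : ℂ) / 2 + ψ))]

lemma hasDerivAt_uMat {χ φ ψ : ℝ → ℝ} {χ' φ' ψ' t : ℝ} (hχ : HasDerivAt χ χ' t)
    (hφ : HasDerivAt φ φ' t) (hψ : HasDerivAt ψ ψ' t) (i j : Fin 2) :
    HasDerivAt (fun s => uMat (χ s) (φ s) (ψ s) i j)
      (uMatDeriv (χ t) (φ t) (ψ t) χ' φ' ψ' i j) t := by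
  have hcos : HasDerivAt (fun s => (Real.cos (χ s) : ℂ)) _ t := hχ.cos.ofReal_comp
  have hsin : HasDerivAt (fun s => (Real.sin (χ s) : ℂ)) _ t := hχ.sin.ofReal_comp
  have hα : HasDerivAt (fun s => (φ s : ℂ) / 2 + ψ s) _ t :=
    (hφ.ofReal_comp.div_const 2).add hψ.ofReal_comp
  have hβ : HasDerivAt (fun s => (φ s : ℂ) / 2 - ψ s) _ t :=
    (hφ.ofReal_comp.div_const 2).sub hψ.ofReal_comp
  have hnsin : HasDerivAt (fun s => -(Real.sin (χ s) : ℂ)) _ t := hsin.neg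
  fin_cases i <;> fin_cases j <;> simp only [uMat, uMatDeriv, Fin.zero_eta, Fin.mk_one,
    Matrix.of_apply, Matrix.cons_val', Matrix.cons_val_zero, Matrix.cons_val_one,
    Matrix.empty_val', Matrix.cons_val_fin_one]
  · exact (hcos.mul_cexp_const_mul _ hα).congr_deriv (by push_cast; ring)
  · exact (hsin.mul_cexp_const_mul _ hβ).congr_deriv (by push_cast; ring)
  · exact (hnsin.mul_cexp_const_mul _ hβ).congr_deriv (by push_cast; ring)
  · exact (hcos.mul_cexp_const_mul _ hα).congr_deriv (by push_cast; ring)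

lemma uMatDeriv_mul_adjugate (χ φ ψ χ' φ' ψ' : ℝ) :
    uMatDeriv χ φ ψ χ' φ' ψ' * (uMat χ φ ψ).adjugate =
      !![-Complex.I * (φ' / 2 + Real.cos (2 * χ) * ψ'),
         Complex.exp (-Complex.I * φ) * (χ' + Complex.I * Real.sin (2 * χ) * ψ');
         -Complex.exp (Complex.I * φ) * (χ' - Complex.I * Real.sin (2 * χ) * ψ'),
         Complex.I * (φ' / 2 + Real.cos (2 * χ) * ψ')] := by
  have hφ : Complex.exp (-Complex.I * φ) =
      Complex.exp (-Complex.I * ((φ : ℂ) / 2 + ψ)) * Complex.exp (-Complex.I * ((φ : ℂ) / 2 - ψ)) := by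
    rw [← Complex.exp_add]; ring_nf
  have hp := Complex.exp_ne_zero (-Complex.I * ((φ : ℂ) / 2 + ψ))
  have hq := Complex.exp_ne_zero (-Complex.I * ((φ : ℂ) / 2 - ψ))
  have hpy := congrArg ((↑) : ℝ → ℂ) (Real.cos_sq_add_sin_sq χ)
  simp only [uMatDeriv, uMat, Matrix.adjugate_fin_two_of, Complex.exp_I_mul_eq_inv, hφ]
  generalize Complex.exp (-Complex.I * ((φ : ℂ) / 2 + ψ)) = p at *
  generalize Complex.exp (-Complex.I * ((φ : ℂ) / 2 - ψ)) = q at *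
  push_cast at hpy ⊢
  simp only [Complex.cos_two_mul, Complex.sin_two_mul]
  ext i j
  fin_cases i <;> fin_cases j <;>
    simp only [Matrix.mul_apply, Fin.sum_univ_two, Matrix.of_apply, Matrix.cons_val',
      Matrix.cons_val_fin_one, Matrix.cons_val_zero, Matrix.cons_val_one, Fin.zero_eta, Fin.mk_one,
      Fin.isValue] <;>
    field_simp <;> grind

lemma uMatDeriv_eq_iff (κ X Y χ φ ψ χ' φ' ψ' : ℝ) :
    uMatDeriv χ φ ψ χ' φ' ψ' = (-Complex.I) • (Hmat κ X Y * uMat χ φ ψ) ↔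
      χ' = κ * (X * Real.sin φ + Y * Real.cos φ) ∧
      φ' / 2 + Real.cos (2 * χ) * ψ' = 1 / 2 ∧
      Real.sin (2 * χ) * ψ' = -κ * (X * Real.cos φ - Y * Real.sin φ) := by
  rw [← smul_mul_assoc, eq_mul_iff_mul_adjugate_eq (det_uMat χ φ ψ), uMatDeriv_mul_adjugate]
  have hexp : Complex.exp (Complex.I * φ) = Real.cos φ + Real.sin φ * Complex.I := by
    rw [mul_comm, Complex.exp_ofReal_mul_I]
  have hexp' : Complex.exp (-Complex.I * φ) = Real.cos φ - Real.sin φ * Complex.I := by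
    rw [show -Complex.I * φ = ↑(-φ) * Complex.I by push_cast; ring, Complex.exp_ofReal_mul_I,
      Real.cos_neg, Real.sin_neg]
    push_cast; ring
  have hpy := Real.cos_sq_add_sin_sq φ
  simp only [Hmat, ← Matrix.ext_iff, Fin.forall_fin_two, hexp, hexp']
  generalize Real.cos φ = c at *
  generalize Real.sin φ = s at *
  generalize Real.cos (2 * χ) = C
  generalize Real.sin (2 * χ) = S
  simp only [neg_mul, neg_add_rev, Fin.isValue, Matrix.of_apply, Matrix.cons_val',
    Matrix.cons_val_zero, Matrix.cons_val_fin_one, one_div, Matrix.smul_apply, smul_eq_mul, neg_inj,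
    mul_eq_mul_left_iff, Complex.ext_iff, Complex.add_re, Complex.div_ofNat_re, Complex.ofReal_re,
    Complex.mul_re, Complex.ofReal_im, mul_zero, sub_zero, Complex.inv_re, Complex.re_ofNat,
    Complex.normSq_ofNat, div_self_mul_self', Complex.add_im, Complex.div_ofNat_im, zero_div,
    Complex.mul_im, zero_mul, add_zero, Complex.inv_im, Complex.im_ofNat, neg_zero, and_true,
    Complex.I_re, Complex.zero_re, Complex.I_im, Complex.zero_im, one_ne_zero, and_false, or_false,
    Matrix.cons_val_one, Complex.sub_re, mul_one, sub_self, one_mul, zero_add, Complex.sub_im,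
    zero_sub, sub_neg_eq_add, Complex.neg_re, neg_neg, Complex.neg_im, mul_neg]
  constructor
  · rintro ⟨⟨h00, hre, him⟩, -, -⟩
    exact ⟨by linear_combination c * hre - s * him - χ' * hpy, h00,
      by linear_combination s * hre + c * him - S * ψ' * hpy⟩
  · rintro ⟨hχ', h00, hψ'⟩
    have hre : c * χ' + s * (S * ψ') = κ * Y := by
      linear_combination c * hχ' + s * hψ' + κ * Y * hpy
    have him : c * (S * ψ') + -(s * χ') = -(κ * X) := by
      linear_combination c * hψ' - s * hχ' - κ * X * hpy
    exact ⟨⟨h00, hre, him⟩, ⟨by linear_combination -hre, him⟩, h00⟩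

lemma uMatDeriv_eq_iff_of_sin_ne_zero {κ X Y χ φ ψ χ' φ' ψ' : ℝ} (h : Real.sin (2 * χ) ≠ 0) :
    uMatDeriv χ φ ψ χ' φ' ψ' = (-Complex.I) • (Hmat κ X Y * uMat χ φ ψ) ↔
      χ' = κ * (X * Real.sin φ + Y * Real.cos φ) ∧
      φ' = 1 + 2 * κ * (Real.cos (2 * χ) / Real.sin (2 * χ)) *
        (X * Real.cos φ - Y * Real.sin φ) ∧
      ψ' = -(κ / Real.sin (2 * χ)) * (X * Real.cos φ - Y * Real.sin φ) := by
  rw [uMatDeriv_eq_iff]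
  refine and_congr_right fun _ => ?_
  generalize Real.sin (2 * χ) = S at *
  generalize X * Real.cos φ - Y * Real.sin φ = D
  have hψ' : S * ψ' = -κ * D ↔ ψ' = -(κ / S) * D := by
    constructor <;> intro h <;> field_simp at h ⊢ <;> linear_combination h
  rw [hψ']
  constructor
  · rintro ⟨hφ', rfl⟩
    refine ⟨?_, rfl⟩
    linear_combination 2 * hφ'
  · rintro ⟨rfl, rfl⟩
    refine ⟨by ring, rfl⟩

lemma forall_hasDerivAt_uMat_iff {χ φ ψ : ℝ → ℝ} {χ' φ' ψ' t : ℝ} (hχ : HasDerivAt χ χ' t)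
    (hφ : HasDerivAt φ φ' t) (hψ : HasDerivAt ψ ψ' t) (G : Matrix (Fin 2) (Fin 2) ℂ) :
    (∀ i j, HasDerivAt (fun s => uMat (χ s) (φ s) (ψ s) i j) (G i j) t) ↔
      uMatDeriv (χ t) (φ t) (ψ t) χ' φ' ψ' = G := by
  simp only [(hasDerivAt_uMat hχ hφ hψ _ _).hasDerivAt_iff_eq, Matrix.ext_iff]

/-- `U_t = u(χ_t, φ_t, ψ_t)` solves the Schrödinger equation `i dU_t = H(t) U_t dt`
if and only if the coordinates satisfy
`dχ = κ[X sin φ + Y cos φ] dt`,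
`dφ = (1 + (2κ/tan 2χ)[X cos φ − Y sin φ]) dt`,
`dψ = −(κ/sin 2χ)[X cos φ − Y sin φ] dt`
(`1/tan 2χ` is written `cos 2χ / sin 2χ`). -/
theorem schrodinger_iff_coordinate_system
    (κ : ℝ) (X Y χ φp ψp : ℝ → ℝ)
    (hχd : Differentiable ℝ χ) (hφd : Differentiable ℝ φp) (hψd : Differentiable ℝ ψp)
    (hrange : ∀ t, χ t ∈ Set.Ioo 0 (π / 2)) :
    (∀ (t : ℝ) (i j : Fin 2),
        HasDerivAt (fun s => uMat (χ s) (φp s) (ψp s) i j)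
          (((-Complex.I) • (Hmat κ (X t) (Y t) * uMat (χ t) (φp t) (ψp t))) i j) t)
    ↔
    (∀ t : ℝ,
      HasDerivAt χ (κ * (X t * Real.sin (φp t) + Y t * Real.cos (φp t))) t ∧
      HasDerivAt φp (1 + 2 * κ * (Real.cos (2 * χ t) / Real.sin (2 * χ t)) *
        (X t * Real.cos (φp t) - Y t * Real.sin (φp t))) t ∧
      HasDerivAt ψp (-(κ / Real.sin (2 * χ t)) *
        (X t * Real.cos (φp t) - Y t * Real.sin (φp t))) t) := by
  refine forall_congr' fun t => ?_
  have hsin : Real.sin (2 * χ t) ≠ 0 := by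
    obtain ⟨h0, hπ⟩ := hrange t
    exact (Real.sin_pos_of_pos_of_lt_pi (by linarith) (by linarith)).ne'
  have hχ := (hχd t).hasDerivAt
  have hφ := (hφd t).hasDerivAt
  have hψ := (hψd t).hasDerivAt
  rw [forall_hasDerivAt_uMat_iff hχ hφ hψ, uMatDeriv_eq_iff_of_sin_ne_zero hsin,
    hχ.hasDerivAt_iff_eq, hφ.hasDerivAt_iff_eq, hψ.hasDerivAt_iff_eq]

end
end

section
/- If U is a random element of SU(2) distributed according to the Haar probability measure, then for every b ∈ [0,1], the probability that |⟨+|U|−⟩|² ≤ b equals b; that is, the squared modulus of the off-diagonal matrix element of U (in the canonical basis of C²) is uniformly distributed on [0,1]. In particular its expectation equals 1/2. -/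
/-!
A left-invariant and a right-invariant probability measure on `SU(2)` coincide (Fubini), so it
suffices to exhibit one right-invariant measure. Identify `ℂ²` with the quaternions, and `SU(2)`
with the unit quaternions via `su2Mat`. Pushing the standard complex Gaussian measure on `ℂ²`
forward along `v ↦ su2Mat (v / ‖v‖)` gives such a measure, because right multiplication by a unit
quaternion is a linear map preserving the Gaussian density. Under it
`|U₀₁|² = |v₂|² / (|v₁|² + |v₂|²)`, where `|v₁|²` and `|v₂|²` are independent standard exponential
variables, and this ratio is uniform on `[0, 1]`.
-/

open MeasureTheory

noncomputable section

instance : MeasurableSpace (Matrix (Fin 2) (Fin 2) ℂ) :=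
  inferInstanceAs (MeasurableSpace (Fin 2 → Fin 2 → ℂ))

open Set Complex ComplexConjugate Real
open scoped ENNReal

namespace MeasureTheory.Measure

theorem eq_of_map_mul_left_eq_of_map_mul_right_eq {M : Type*} [Monoid M] [MeasurableSpace M]
    [MeasurableMul₂ M] {H : Set M} {μ ν : Measure M} [IsProbabilityMeasure μ]
    [IsProbabilityMeasure ν] (hμH : ∀ᵐ x ∂μ, x ∈ H) (hνH : ∀ᵐ x ∂ν, x ∈ H)
    (hμ : ∀ g ∈ H, μ.map (g * ·) = μ) (hν : ∀ g ∈ H, ν.map (· * g) = ν) : μ = ν := by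
  ext s hs
  have hS : MeasurableSet {p : M × M | p.1 * p.2 ∈ s} := measurable_mul hs
  calc μ s = ∫⁻ y, μ ((y * ·) ⁻¹' s) ∂ν := by
        rw [lintegral_congr_ae (g := fun _ => μ s) (hνH.mono fun y hy => by
          rw [← map_apply (measurable_const_mul y) hs, hμ y hy]), lintegral_const, measure_univ,
          mul_one]
    _ = ∫⁻ x, ν ((· * x) ⁻¹' s) ∂μ := (prod_apply hS).symm.trans (prod_apply_symm hS)
    _ = ν s := by
        rw [lintegral_congr_ae (g := fun _ => ν s) (hμH.mono fun x hx => by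
          rw [← map_apply (measurable_mul_const x) hs, hν x hx]), lintegral_const, measure_univ,
          mul_one]

theorem map_linearEquiv_withDensity_eq_self {E : Type*} [NormedAddCommGroup E] [NormedSpace ℝ E]
    [MeasurableSpace E] [BorelSpace E] [FiniteDimensional ℝ E] (μ : Measure E)
    [μ.IsAddHaarMeasure] (L : E ≃ₗ[ℝ] E) {ρ : E → ℝ≥0∞} (hρ : Measurable ρ)
    (hρL : ∀ x, ρ (L x) = ρ x) [IsFiniteMeasure (μ.withDensity ρ)] [NeZero (μ.withDensity ρ)] :
    (μ.withDensity ρ).map L = μ.withDensity ρ := by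
  have hL : Measurable L := L.toLinearMap.continuous_of_finiteDimensional.measurable
  -- `L` scales `μ` by some constant `c`, and comparing total masses forces `c = 1`.
  obtain ⟨c, hc⟩ : ∃ c : ℝ≥0∞, μ.map L = c • μ :=
    ⟨_, map_linearMap_addHaar_eq_smul_addHaar μ L.isUnit_det'.ne_zero⟩
  have hmap : (μ.withDensity ρ).map L = c • μ.withDensity ρ := by
    ext s hs
    rw [map_apply hL hs, withDensity_apply _ (hL hs), smul_apply, withDensity_apply _ hs,
      ← lintegral_smul_measure, ← restrict_smul, ← hc, setLIntegral_map hs hρ hL]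
    simp only [hρL]
  have huniv : c * μ.withDensity ρ univ = μ.withDensity ρ univ := by
    rw [← smul_eq_mul, ← smul_apply, ← hmap, map_apply hL .univ, preimage_univ]
  rw [hmap, (ENNReal.mul_eq_right (measure_univ_ne_zero.mpr (NeZero.ne _))
    (measure_ne_top _ _)).mp huniv, one_smul]

end MeasureTheory.Measure

theorem Matrix.isClosed_specialUnitaryGroup {n 𝕜 : Type*} [Fintype n] [DecidableEq n]
    [RCLike 𝕜] : IsClosed (Matrix.specialUnitaryGroup n 𝕜 : Set (Matrix n n 𝕜)) := by
  have : (Matrix.specialUnitaryGroup n 𝕜 : Set (Matrix n n 𝕜)) =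
      {A | A * star A = 1} ∩ {A | A.det = 1} := by
    ext A; simp [Matrix.mem_specialUnitaryGroup_iff, Matrix.mem_unitaryGroup_iff]
  rw [this]
  exact (isClosed_eq (by fun_prop) continuous_const).inter
    (isClosed_eq (by fun_prop) continuous_const)

def complexGaussian : Measure ℂ :=
  volume.withDensity fun z => ENNReal.ofReal (π⁻¹ * Real.exp (-‖z‖ ^ 2))

theorem integral_inv_pi_mul_exp_neg_mul_sq_norm {t : ℝ} (ht : 0 < t) :
    ∫ z : ℂ, π⁻¹ * Real.exp (-t * ‖z‖ ^ 2) = t⁻¹ := by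
  rw [integral_const_mul, GaussianFourier.integral_rexp_neg_mul_sq_norm ht, finrank_real_complex]
  simp
  field_simp

instance : IsProbabilityMeasure complexGaussian := by
  have h := integral_inv_pi_mul_exp_neg_mul_sq_norm one_pos
  simp only [neg_mul, one_mul, inv_one] at h
  refine ⟨?_⟩
  rw [complexGaussian, withDensity_apply _ .univ, Measure.restrict_univ,
    ← ofReal_integral_eq_lintegral_ofReal (.of_integral_ne_zero (by simp [h]))
      (.of_forall fun _ => by positivity), h, ENNReal.ofReal_one]

theorem integral_exp_neg_mul_sq_norm_complexGaussian {c : ℝ} (hc : 0 ≤ c) :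
    ∫ z, Real.exp (-(c * ‖z‖ ^ 2)) ∂complexGaussian = (1 + c)⁻¹ := by
  rw [complexGaussian, integral_withDensity_eq_integral_toReal_smul (by fun_prop)
    (.of_forall fun _ => ENNReal.ofReal_lt_top),
    ← integral_inv_pi_mul_exp_neg_mul_sq_norm (t := 1 + c) (by positivity)]
  congr 1 with z
  rw [ENNReal.toReal_ofReal (by positivity), smul_eq_mul, mul_assoc, ← Real.exp_add]
  ring_nf

theorem complexGaussian_setOf_sq_norm_le {R : ℝ} (hR : 0 ≤ R) :
    complexGaussian {z | ‖z‖ ^ 2 ≤ R} = ENNReal.ofReal (1 - Real.exp (-R)) := by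
  let f : ℝ → ℝ := fun y => π⁻¹ * Real.exp (-y ^ 2)
  have hball : {z : ℂ | ‖z‖ ^ 2 ≤ R} = Metric.closedBall 0 √R := by
    ext z
    simp [Real.le_sqrt (norm_nonneg z) hR]
  have hind : ∀ z : ℂ, (Metric.closedBall 0 √R).indicator (fun z => f ‖z‖) z =
      (Iic √R).indicator f ‖z‖ := fun z => by
    by_cases hz : ‖z‖ ≤ √R <;> simp [hz]
  have hf : ∀ y ∈ uIcc 0 √R, HasDerivAt (fun y => -f y / 2) (y * f y) y := fun y _ =>
    ((((hasDerivAt_pow 2 y).fun_neg.exp).const_mul π⁻¹).fun_neg.div_const 2).congr_deriv (by ring)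
  have hint : Integrable (fun z : ℂ => f ‖z‖) := by
    refine .of_integral_ne_zero ?_
    simpa [f] using (integral_inv_pi_mul_exp_neg_mul_sq_norm one_pos).trans_ne (by simp)
  rw [complexGaussian, withDensity_apply _ (hball ▸ Metric.isClosed_closedBall.measurableSet),
    hball, ← ofReal_integral_eq_lintegral_ofReal hint.integrableOn
      (.of_forall fun _ => by positivity),
    ← integral_indicator Metric.isClosed_closedBall.measurableSet]
  simp_rw [hind]
  rw [integral_fun_norm_addHaar volume, finrank_real_complex]
  have hsmul : ∀ y : ℝ, y ^ (2 - 1) • (Iic √R).indicator f y =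
      (Iic √R).indicator (fun y => y * f y) y := fun y => by
    by_cases hy : y ≤ √R <;> simp [hy]
  simp_rw [hsmul]
  rw [setIntegral_indicator measurableSet_Iic, Ioi_inter_Iic, ← intervalIntegral.integral_of_le
    (Real.sqrt_nonneg R), intervalIntegral.integral_eq_sub_of_hasDerivAt hf
    ((by fun_prop : Continuous fun y => y * f y).intervalIntegrable _ _)]
  congr 1
  simp [f, Measure.real, Complex.volume_ball, Real.sq_sqrt hR]
  field_simp
  ring

theorem complexGaussian_prod_setOf_le {b : ℝ} (hb0 : 0 ≤ b) (hb1 : b < 1) :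
    complexGaussian.prod complexGaussian {v | (1 - b) * ‖v.2‖ ^ 2 ≤ b * ‖v.1‖ ^ 2} =
      ENNReal.ofReal b := by
  have h1b : 0 < 1 - b := sub_pos.mpr hb1
  set c := b / (1 - b)
  have hc : 0 ≤ c := div_nonneg hb0 h1b.le
  have hslice (z : ℂ) : Prod.mk z ⁻¹' {v : ℂ × ℂ | (1 - b) * ‖v.2‖ ^ 2 ≤ b * ‖v.1‖ ^ 2} =
      {w | ‖w‖ ^ 2 ≤ c * ‖z‖ ^ 2} := by
    ext w
    change (1 - b) * ‖w‖ ^ 2 ≤ b * ‖z‖ ^ 2 ↔ ‖w‖ ^ 2 ≤ b / (1 - b) * ‖z‖ ^ 2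
    rw [div_mul_eq_mul_div, le_div_iff₀ h1b, mul_comm]
  have hint : Integrable (fun z => Real.exp (-(c * ‖z‖ ^ 2))) complexGaussian :=
    .of_integral_ne_zero (by rw [integral_exp_neg_mul_sq_norm_complexGaussian hc]; positivity)
  rw [Measure.prod_apply (measurableSet_le (by fun_prop) (by fun_prop))]
  simp_rw [hslice, complexGaussian_setOf_sq_norm_le (by positivity : 0 ≤ c * ‖_‖ ^ 2)]
  rw [← ofReal_integral_eq_lintegral_ofReal (f := fun z => 1 - Real.exp (-(c * ‖z‖ ^ 2)))
      ((integrable_const 1).sub hint)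
      (.of_forall fun z => sub_nonneg.mpr (Real.exp_le_one_iff.mpr (by simp; positivity))),
    integral_sub (integrable_const 1) hint, integral_exp_neg_mul_sq_norm_complexGaussian hc]
  congr 1
  simp only [integral_const, probReal_univ, smul_eq_mul, mul_one, c]
  field_simp
  ring

def pairNormSq (v : ℂ × ℂ) : ℝ := ‖v.1‖ ^ 2 + ‖v.2‖ ^ 2

def normSqRatio (v : ℂ × ℂ) : ℝ := ‖v.2‖ ^ 2 / pairNormSq v

@[fun_prop]
theorem continuous_pairNormSq : Continuous pairNormSq := by
  unfold pairNormSq; fun_prop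

theorem pairNormSq_nonneg (v : ℂ × ℂ) : 0 ≤ pairNormSq v := by
  unfold pairNormSq; positivity

theorem pairNormSq_eq_zero {v : ℂ × ℂ} : pairNormSq v = 0 ↔ v = 0 := by
  simp [pairNormSq, add_eq_zero_iff_of_nonneg, Prod.ext_iff]

theorem normSqRatio_le_iff {v : ℂ × ℂ} {b : ℝ} (hb : 0 ≤ b) :
    normSqRatio v ≤ b ↔ (1 - b) * ‖v.2‖ ^ 2 ≤ b * ‖v.1‖ ^ 2 := by
  rcases (pairNormSq_nonneg v).eq_or_lt with h | h
  · obtain rfl := pairNormSq_eq_zero.mp h.symm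
    simp [normSqRatio, hb]
  · rw [normSqRatio, div_le_iff₀ h, pairNormSq]
    constructor <;> intro <;> linarith

theorem normSqRatio_le_one (v : ℂ × ℂ) : normSqRatio v ≤ 1 :=
  (normSqRatio_le_iff zero_le_one).mpr (by simp)

theorem volume_restrict_Icc_zero_one_Iic (b : ℝ) :
    volume.restrict (Icc 0 1) (Iic b) = ENNReal.ofReal (min b 1) := by
  have h : Iic b ∩ Icc 0 1 = Icc 0 (min b 1) := by
    ext x; simp only [mem_inter_iff, mem_Iic, mem_Icc, le_min_iff]; tauto
  rw [Measure.restrict_apply measurableSet_Iic, h, Real.volume_Icc, sub_zero]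

theorem map_normSqRatio_complexGaussian_prod :
    (complexGaussian.prod complexGaussian).map normSqRatio = volume.restrict (Icc 0 1) := by
  refine Measure.ext_of_Iic _ _ fun b => ?_
  have hmeas : Measurable normSqRatio := by unfold normSqRatio; fun_prop
  rw [Measure.map_apply hmeas measurableSet_Iic, volume_restrict_Icc_zero_one_Iic]
  rcases lt_or_ge b 0 with hb0 | hb0
  · have : normSqRatio ⁻¹' Iic b = ∅ := eq_empty_of_forall_notMem fun v hv =>
      (div_nonneg (sq_nonneg _) (pairNormSq_nonneg v)).not_gt (lt_of_le_of_lt hv hb0)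
    rw [this, measure_empty, ENNReal.ofReal_of_nonpos ((min_le_left b 1).trans hb0.le)]
  rcases lt_or_ge b 1 with hb1 | hb1
  · have : normSqRatio ⁻¹' Iic b = {v | (1 - b) * ‖v.2‖ ^ 2 ≤ b * ‖v.1‖ ^ 2} := by
      ext v; exact normSqRatio_le_iff hb0
    rw [this, complexGaussian_prod_setOf_le hb0 hb1, min_eq_left hb1.le]
  · have : normSqRatio ⁻¹' Iic b = univ :=
      eq_univ_of_forall fun v => (normSqRatio_le_one v).trans hb1
    rw [this, measure_univ, min_eq_right hb1, ENNReal.ofReal_one]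

def su2Mat (v : ℂ × ℂ) : Matrix (Fin 2) (Fin 2) ℂ := !![v.1, v.2; -conj v.2, conj v.1]

/-- Multiplication of quaternions `v.1 + v.2 j`, so that `su2Mat` is multiplicative. -/
def quatMul (v w : ℂ × ℂ) : ℂ × ℂ := (v.1 * w.1 - v.2 * conj w.2, v.1 * w.2 + v.2 * conj w.1)

theorem su2Mat_mul_su2Mat (v w : ℂ × ℂ) : su2Mat v * su2Mat w = su2Mat (quatMul v w) := by
  ext i j
  fin_cases i <;> fin_cases j <;> simp [su2Mat, quatMul, Matrix.mul_apply] <;> ring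

theorem det_su2Mat (v : ℂ × ℂ) : (su2Mat v).det = pairNormSq v := by
  simp [su2Mat, pairNormSq, Matrix.det_fin_two_of, mul_conj']

theorem star_su2Mat (v : ℂ × ℂ) : star (su2Mat v) = su2Mat (conj v.1, -v.2) := by
  ext i j
  fin_cases i <;> fin_cases j <;> simp [su2Mat, Matrix.star_apply]

theorem pairNormSq_quatMul (v w : ℂ × ℂ) :
    pairNormSq (quatMul v w) = pairNormSq v * pairNormSq w := by
  have h := congrArg Matrix.det (su2Mat_mul_su2Mat v w)
  rw [Matrix.det_mul, det_su2Mat, det_su2Mat, det_su2Mat] at h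
  exact_mod_cast h.symm

theorem su2Mat_mem_specialUnitaryGroup {v : ℂ × ℂ} (hv : pairNormSq v = 1) :
    su2Mat v ∈ Matrix.specialUnitaryGroup (Fin 2) ℂ := by
  refine ⟨Matrix.mem_unitaryGroup_iff.mpr ?_, by simp [det_su2Mat, hv]⟩
  have h : quatMul v (conj v.1, -v.2) = ((pairNormSq v : ℝ) : ℂ) • (1, 0) := by
    simp [quatMul, pairNormSq, mul_conj']; ring
  rw [star_su2Mat, su2Mat_mul_su2Mat, h, hv]
  ext i j
  fin_cases i <;> fin_cases j <;> simp [su2Mat]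

theorem exists_su2Mat_eq_of_mem_specialUnitaryGroup {A : Matrix (Fin 2) (Fin 2) ℂ}
    (hA : A ∈ Matrix.specialUnitaryGroup (Fin 2) ℂ) : ∃ w, pairNormSq w = 1 ∧ su2Mat w = A := by
  obtain ⟨hU, hdet⟩ := Matrix.mem_specialUnitaryGroup_iff.mp hA
  -- `star A = A⁻¹` is the adjugate of `A`, since `det A = 1`
  have hadj : star A = A.adjugate := by
    rw [← Matrix.inv_eq_left_inv (Matrix.mem_unitaryGroup_iff'.mp hU), Matrix.inv_def, hdet]
    simp
  have h00 := congrFun (congrFun hadj 0) 0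
  have h01 := congrFun (congrFun hadj 0) 1
  simp [Matrix.adjugate_fin_two, Matrix.star_apply] at h00 h01
  have h10 : A 1 0 = -conj (A 0 1) := by simpa using congrArg conj h01
  have hA' : su2Mat (A 0 0, A 0 1) = A := by
    ext i j
    fin_cases i <;> fin_cases j <;> simp [su2Mat, ← h00, h10]
  refine ⟨(A 0 0, A 0 1), ?_, hA'⟩
  exact_mod_cast (det_su2Mat _).symm.trans (hA' ▸ hdet)

def quatMulRight (w : ℂ × ℂ) : ℂ × ℂ →ₗ[ℝ] ℂ × ℂ where
  toFun v := quatMul v w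
  map_add' _ _ := by ext <;> simp [quatMul] <;> ring
  map_smul' _ _ := by ext <;> simp [quatMul] <;> ring

theorem quatMulRight_injective {w : ℂ × ℂ} (hw : pairNormSq w = 1) :
    Function.Injective (quatMulRight w) :=
  (injective_iff_map_eq_zero _).mpr fun v hv => pairNormSq_eq_zero.mp <| by
    simpa [quatMulRight, hv, pairNormSq_quatMul, hw] using
      (pairNormSq_eq_zero (v := quatMul v w)).mpr hv

theorem complexGaussian_prod_eq_withDensity :
    complexGaussian.prod complexGaussian = (volume.prod volume).withDensity
      fun v => ENNReal.ofReal (π⁻¹ ^ 2 * Real.exp (-pairNormSq v)) := by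
  rw [complexGaussian, prod_withDensity (by fun_prop) (by fun_prop)]
  congr 1 with v
  rw [← ENNReal.ofReal_mul (by positivity), pairNormSq, neg_add, Real.exp_add]
  ring_nf

theorem map_quatMulRight_complexGaussian_prod {w : ℂ × ℂ} (hw : pairNormSq w = 1) :
    (complexGaussian.prod complexGaussian).map (quatMulRight w) =
      complexGaussian.prod complexGaussian := by
  rw [complexGaussian_prod_eq_withDensity]
  have : IsProbabilityMeasure ((volume.prod volume).withDensity
      fun v : ℂ × ℂ => ENNReal.ofReal (π⁻¹ ^ 2 * Real.exp (-pairNormSq v))) := by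
    rw [← complexGaussian_prod_eq_withDensity]; infer_instance
  have h := Measure.map_linearEquiv_withDensity_eq_self (volume.prod volume)
    (.ofInjectiveEndo _ (quatMulRight_injective hw))
    (ρ := fun v => ENNReal.ofReal (π⁻¹ ^ 2 * Real.exp (-pairNormSq v))) (by fun_prop)
    fun v => by
      rw [LinearEquiv.coe_ofInjectiveEndo]
      simp only [quatMulRight, LinearMap.coe_mk, AddHom.coe_mk, pairNormSq_quatMul, hw, mul_one]
  rwa [LinearEquiv.coe_ofInjectiveEndo] at h

instance : BorelSpace (Matrix (Fin 2) (Fin 2) ℂ) :=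
  inferInstanceAs (BorelSpace (Fin 2 → Fin 2 → ℂ))

instance : SecondCountableTopology (Matrix (Fin 2) (Fin 2) ℂ) :=
  inferInstanceAs (SecondCountableTopology (Fin 2 → Fin 2 → ℂ))

@[fun_prop]
theorem continuous_su2Mat : Continuous su2Mat :=
  continuous_pi fun i => continuous_pi fun j => by
    fin_cases i <;> fin_cases j <;> simp [su2Mat] <;> fun_prop

def su2OfPair (v : ℂ × ℂ) : Matrix (Fin 2) (Fin 2) ℂ := su2Mat ((√(pairNormSq v))⁻¹ • v)

theorem measurable_su2OfPair : Measurable su2OfPair := by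
  unfold su2OfPair; fun_prop

theorem pairNormSq_smul (r : ℝ) (v : ℂ × ℂ) : pairNormSq (r • v) = r ^ 2 * pairNormSq v := by
  simp [pairNormSq, mul_pow]; ring

theorem su2OfPair_mem_specialUnitaryGroup {v : ℂ × ℂ} (hv : v ≠ 0) :
    su2OfPair v ∈ Matrix.specialUnitaryGroup (Fin 2) ℂ :=
  su2Mat_mem_specialUnitaryGroup <| by
    rw [pairNormSq_smul, inv_pow, Real.sq_sqrt (pairNormSq_nonneg v),
      inv_mul_cancel₀ (mt pairNormSq_eq_zero.mp hv)]

theorem su2OfPair_mul_su2Mat {w : ℂ × ℂ} (hw : pairNormSq w = 1) (v : ℂ × ℂ) :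
    su2OfPair v * su2Mat w = su2OfPair (quatMulRight w v) := by
  have hnorm : pairNormSq (quatMulRight w v) = pairNormSq v := by
    simp [quatMulRight, pairNormSq_quatMul, hw]
  rw [su2OfPair, su2OfPair, hnorm, su2Mat_mul_su2Mat]
  exact congrArg su2Mat ((quatMulRight w).map_smul _ v)

theorem norm_su2OfPair_zero_one_sq (v : ℂ × ℂ) : ‖su2OfPair v 0 1‖ ^ 2 = normSqRatio v := by
  simp [su2OfPair, su2Mat, normSqRatio, mul_pow, Real.sq_sqrt (pairNormSq_nonneg v),
    div_eq_inv_mul]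

theorem ae_ne_zero_complexGaussian_prod : ∀ᵐ v ∂complexGaussian.prod complexGaussian, v ≠ 0 := by
  refine measure_mono_null (fun v (hv : ¬v ≠ 0) => ?_ : _ ⊆ {(0 : ℂ)} ×ˢ univ) ?_
  · simp [not_not.mp hv]
  · rw [Measure.prod_prod, complexGaussian,
      withDensity_absolutelyContinuous _ _ (measure_singleton 0), zero_mul]

def su2Haar : Measure (Matrix (Fin 2) (Fin 2) ℂ) :=
  (complexGaussian.prod complexGaussian).map su2OfPair

instance : IsProbabilityMeasure su2Haar :=
  Measure.isProbabilityMeasure_map measurable_su2OfPair.aemeasurable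

theorem ae_mem_specialUnitaryGroup_su2Haar :
    ∀ᵐ A ∂su2Haar, A ∈ Matrix.specialUnitaryGroup (Fin 2) ℂ :=
  (ae_map_iff measurable_su2OfPair.aemeasurable
    Matrix.isClosed_specialUnitaryGroup.measurableSet).mpr
    (ae_ne_zero_complexGaussian_prod.mono fun _ => su2OfPair_mem_specialUnitaryGroup)

theorem map_mul_right_su2Haar {A : Matrix (Fin 2) (Fin 2) ℂ}
    (hA : A ∈ Matrix.specialUnitaryGroup (Fin 2) ℂ) : su2Haar.map (· * A) = su2Haar := by
  obtain ⟨w, hw, rfl⟩ := exists_su2Mat_eq_of_mem_specialUnitaryGroup hA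
  rw [su2Haar, Measure.map_map (measurable_mul_const _) measurable_su2OfPair,
    show (· * su2Mat w) ∘ su2OfPair = su2OfPair ∘ quatMulRight w from
      funext (su2OfPair_mul_su2Mat hw),
    ← Measure.map_map measurable_su2OfPair
      (quatMulRight w).continuous_of_finiteDimensional.measurable,
    map_quatMulRight_complexGaussian_prod hw]

theorem map_norm_sq_apply_zero_one_su2Haar :
    su2Haar.map (fun A => ‖A 0 1‖ ^ 2) = volume.restrict (Icc 0 1) := by
  rw [su2Haar, Measure.map_map (by fun_prop) measurable_su2OfPair,
    show (fun A => ‖A 0 1‖ ^ 2) ∘ su2OfPair = normSqRatio from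
      funext norm_su2OfPair_zero_one_sq]
  exact map_normSqRatio_complexGaussian_prod

/-- If `U` is distributed according to the Haar probability measure on `SU(2)`
(viewed as a probability measure on `2×2` complex matrices, supported on `SU(2)`
and invariant under left translations by elements of `SU(2)`), then the squared
modulus of the off-diagonal entry `⟨+|U|−⟩` is uniformly distributed on `[0,1]`;
in particular its expectation is `1/2`. -/
theorem offdiagonal_entry_uniform_under_haar
    (μ : Measure (Matrix (Fin 2) (Fin 2) ℂ)) [IsProbabilityMeasure μ]
    (hsupp : μ {A | A ∈ Matrix.specialUnitaryGroup (Fin 2) ℂ} = 1)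
    (hinv : ∀ g ∈ Matrix.specialUnitaryGroup (Fin 2) ℂ,
      Measure.map (fun A => g * A) μ = μ) :
    (∀ b ∈ Set.Icc (0 : ℝ) 1,
      μ {A | ‖A 0 1‖ ^ 2 ≤ b} = ENNReal.ofReal b) ∧
    ∫ A, ‖A 0 1‖ ^ 2 ∂μ = 1 / 2 := by
  have hμ : μ = su2Haar := Measure.eq_of_map_mul_left_eq_of_map_mul_right_eq
    ((ae_iff_measure_eq Matrix.isClosed_specialUnitaryGroup.measurableSet.nullMeasurableSet).mpr
      (hsupp.trans measure_univ.symm))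
    ae_mem_specialUnitaryGroup_su2Haar hinv fun _ => map_mul_right_su2Haar
  have hX : Measurable fun A : Matrix (Fin 2) (Fin 2) ℂ => ‖A 0 1‖ ^ 2 := by fun_prop
  have hlaw : μ.map (fun A => ‖A 0 1‖ ^ 2) = volume.restrict (Icc 0 1) :=
    hμ ▸ map_norm_sq_apply_zero_one_su2Haar
  refine ⟨fun b hb => ?_, ?_⟩
  · change μ ((fun A => ‖A 0 1‖ ^ 2) ⁻¹' Iic b) = _
    rw [← Measure.map_apply hX measurableSet_Iic, hlaw, volume_restrict_Icc_zero_one_Iic,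
      min_eq_left hb.2]
  · calc ∫ A, ‖A 0 1‖ ^ 2 ∂μ = ∫ x, x ∂(μ.map fun A => ‖A 0 1‖ ^ 2) :=
          (integral_map hX.aemeasurable aestronglyMeasurable_id).symm
      _ = 1 / 2 := by
          rw [hlaw, integral_Icc_eq_integral_Ioc, ← intervalIntegral.integral_of_le zero_le_one,
            integral_id]
          norm_num
end
end

section
/- Fix δ > 0 and an initial condition x_0 = (Z_0, ȳ_0, φ_0) ∈ D_{(−1+δ, 1−δ)}. For any φ* > φ_0 and any κ < δ/2, the first time τ_{φ*} = inf{t > 0 : φ_t = φ*} belongs to the set [ (φ*−φ_0)/(1+2κ/δ), (φ*−φ_0)/(1−2κ/δ) ] ∪ [ τ_{(−1+δ,1−δ)}, ∞ ]. -/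
/-!
While `(Z, ȳ, φ)` stays in `D_{(−1+δ,1−δ)}`, the corrector `κ w` is at most `2κ √(1 − y²) < δ √(1 − y²)`
in absolute value, so `|y| < 1 − δ + δ √(1 − y²)`, which forces `δ |y| ≤ √(1 − y²)`.
Hence the drift term in `dφ/dt` is at most `2κ/δ` in absolute value: the clock `φ` runs with
speed in `[1 − 2κ/δ, 1 + 2κ/δ]` until the exit time, and the mean value theorem bounds the
first time it reaches `φ*`.
-/

open Real MeasureTheory ENNReal

noncomputable section

/-- First time (after `0`) at which a predicate on time holds, as an extended real. -/
def firstTime (p : ℝ → Prop) : ℝ≥0∞ :=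
  ⨅ (t : ℝ) (_ : 0 < t ∧ p t), ENNReal.ofReal t

open Set

section FirstTime

variable {p : ℝ → Prop}

theorem firstTime_le_ofReal {t : ℝ} (ht : 0 < t) (hp : p t) : firstTime p ≤ ENNReal.ofReal t :=
  iInf₂_le t ⟨ht, hp⟩

theorem ofReal_le_firstTime {s : ℝ} (h : ∀ t, 0 < t → p t → s ≤ t) :
    ENNReal.ofReal s ≤ firstTime p :=
  le_iInf₂ fun t ht => ENNReal.ofReal_le_ofReal (h t ht.1 ht.2)

theorem exists_of_firstTime_lt {x : ℝ≥0∞} (h : firstTime p < x) :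
    ∃ t, 0 < t ∧ p t ∧ ENNReal.ofReal t < x := by
  simp only [firstTime, iInf_lt_iff] at h
  obtain ⟨t, ⟨ht, hp⟩, hlt⟩ := h
  exact ⟨t, ht, hp, hlt⟩

theorem forall_mem_Icc_of_lt_firstTime_not {t : ℝ} (h0 : p 0)
    (ht : ENNReal.ofReal t < firstTime fun u => ¬p u) : ∀ u ∈ Icc 0 t, p u := by
  rintro u ⟨hu0, hut⟩
  rcases hu0.eq_or_lt with rfl | hu0
  · exact h0
  · by_contra hpu
    exact (firstTime_le_ofReal hu0 hpu |>.trans (ENNReal.ofReal_le_ofReal hut)).not_gt ht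

theorem exists_firstTime_eq_ofReal_of_isClosed (hp : IsClosed {t | p t}) (h0 : ¬p 0)
    {t₀ : ℝ} (ht₀ : 0 < t₀) (hpt₀ : p t₀) :
    ∃ s ∈ Ioc 0 t₀, p s ∧ firstTime p = ENNReal.ofReal s := by
  set K := Icc 0 t₀ ∩ {t | p t}
  have hK : K.Nonempty := ⟨t₀, ⟨ht₀.le, le_rfl⟩, hpt₀⟩
  have hKbdd : BddBelow K := ⟨0, fun _ hx => hx.1.1⟩
  obtain ⟨⟨hs0, hst₀⟩, hps⟩ : sInf K ∈ K := (isClosed_Icc.inter hp).csInf_mem hK hKbdd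
  have hs_pos : 0 < sInf K := hs0.lt_of_ne fun h => h0 (h ▸ hps)
  refine ⟨sInf K, ⟨hs_pos, hst₀⟩, hps, (firstTime_le_ofReal hs_pos hps).antisymm ?_⟩
  refine ofReal_le_firstTime fun t ht hpt => ?_
  rcases le_or_gt t t₀ with htt₀ | htt₀
  · exact csInf_le hKbdd ⟨⟨ht.le, htt₀⟩, hpt⟩
  · exact hst₀.trans htt₀.le

end FirstTime

theorem firstTime_eq_mem_of_hasDerivAt_mem_Icc {f f' : ℝ → ℝ} {q : ℝ → Prop} {a m M : ℝ}
    (hf : ∀ t, HasDerivAt f (f' t) t) (hm : 0 < m) (hspeed : ∀ t, q t → f' t ∈ Icc m M)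
    (h0 : q 0) (ha : f 0 < a) :
    firstTime (fun t => f t = a) ∈
      Icc (ENNReal.ofReal ((a - f 0) / M)) (ENNReal.ofReal ((a - f 0) / m)) ∪
        Ici (firstTime fun t => ¬q t) := by
  rcases le_or_gt (firstTime fun t => ¬q t) (firstTime fun t => f t = a) with h | h
  · exact Or.inr h
  left
  have hdiff : Differentiable ℝ f := fun t => (hf t).differentiableAt
  obtain ⟨t₀, ht₀, hft₀, ht₀lt⟩ := exists_of_firstTime_lt h
  obtain ⟨s, ⟨hs, hst₀⟩, hfs, hτ⟩ := exists_firstTime_eq_ofReal_of_isClosed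
    (isClosed_eq hdiff.continuous continuous_const) ha.ne ht₀ hft₀
  have hq : ∀ u ∈ Icc 0 s, q u := forall_mem_Icc_of_lt_firstTime_not h0
    ((ENNReal.ofReal_le_ofReal hst₀).trans_lt ht₀lt)
  have hderiv : ∀ u ∈ interior (Icc 0 s), deriv f u ∈ Icc m M := fun u hu => by
    rw [(hf u).deriv]
    exact hspeed u (hq u (interior_subset hu))
  have hlow : m * (s - 0) ≤ f s - f 0 :=
    (convex_Icc 0 s).mul_sub_le_image_sub_of_le_deriv hdiff.continuous.continuousOn
      hdiff.differentiableOn (fun u hu => (hderiv u hu).1) 0 (left_mem_Icc.2 hs.le) s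
      (right_mem_Icc.2 hs.le) hs.le
  have hup : f s - f 0 ≤ M * (s - 0) :=
    (convex_Icc 0 s).image_sub_le_mul_sub_of_deriv_le hdiff.continuous.continuousOn
      hdiff.differentiableOn (fun u hu => (hderiv u hu).2) 0 (left_mem_Icc.2 hs.le) s
      (right_mem_Icc.2 hs.le) hs.le
  have hM : 0 < M := hm.trans_le ((hspeed 0 h0).1.trans (hspeed 0 h0).2)
  rw [hfs] at hlow hup
  rw [hτ]
  exact ⟨ENNReal.ofReal_le_ofReal ((div_le_iff₀ hM).2 (by linarith)),
    ENNReal.ofReal_le_ofReal ((le_div_iff₀ hm).2 (by linarith))⟩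

/-- The paper's `w(Z, y, φ)`, so that `ȳ = y + κ w`. -/
def corrector (γ Z y φ : ℝ) : ℝ :=
  2 * Z / (1 + γ ^ 2) * √(1 - y ^ 2) * (cos φ + γ * sin φ)

theorem abs_corrector_le (γ φ : ℝ) {Z y : ℝ} (hZ : |Z| ≤ 1) :
    |corrector γ Z y φ| ≤ 2 * √(1 - y ^ 2) := by
  have hγ : 0 < 1 + γ ^ 2 := by positivity
  have htrig : |cos φ + γ * sin φ| ≤ 1 + γ ^ 2 := by
    -- Cauchy–Schwarz: `(cos φ + γ sin φ)² ≤ 1 + γ² ≤ (1 + γ²)²`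
    refine abs_le_of_sq_le_sq ?_ hγ.le
    nlinarith [sq_nonneg (γ * cos φ - sin φ), cos_sq_add_sin_sq φ, sq_nonneg γ]
  calc |corrector γ Z y φ|
      = 2 * |Z| * √(1 - y ^ 2) * (|cos φ + γ * sin φ| / (1 + γ ^ 2)) := by
        rw [corrector, abs_mul, abs_mul, abs_div, abs_mul, abs_of_pos hγ, abs_two,
          abs_of_nonneg (sqrt_nonneg _)]
        ring
    _ ≤ 2 * 1 * √(1 - y ^ 2) * 1 := by
        gcongr
        exact (div_le_one hγ).2 htrig
    _ = 2 * √(1 - y ^ 2) := by ring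

theorem mul_abs_le_sqrt_one_sub_sq {δ y e : ℝ} (hδ : 0 < δ) (he : |e| ≤ δ * √(1 - y ^ 2))
    (hye : y + e ∈ Ioo (-1 + δ) (1 - δ)) : δ * |y| ≤ √(1 - y ^ 2) := by
  set r := √(1 - y ^ 2)
  have hr : 0 ≤ r := sqrt_nonneg _
  have hr2 : 1 - |y| ^ 2 ≤ r ^ 2 := by
    rw [sq_abs, sq_sqrt']
    exact le_max_left _ _
  have hδ1 : δ < 1 := by linarith [hye.1, hye.2]
  have hy : |y| < 1 - δ + δ * r := by
    have : |y + e| < 1 - δ := abs_lt.2 ⟨by linarith [hye.1], hye.2⟩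
    have htri := abs_add_le (y + e) (-e)
    rw [abs_neg, add_neg_cancel_right] at htri
    linarith
  -- if `r < δ |y|` then `|y| < 1 - δ + δ² |y|`, i.e. `|y| (1 + δ) < 1`, and then `δ² y² ≤ 1 - y² ≤ r²`
  by_contra! hlt
  have h1 : |y| * (1 + δ) < 1 := by
    nlinarith [mul_lt_mul_of_pos_left hlt hδ]
  have h2 : δ ^ 2 * |y| ^ 2 ≤ 1 - |y| ^ 2 := by
    nlinarith [abs_nonneg y, mul_self_lt_mul_self (by positivity) h1]
  nlinarith [mul_self_lt_mul_self hr hlt]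

theorem abs_clockDrift_le {γ κ δ Z y φ : ℝ} (hκ : 0 < κ) (hκδ : 2 * κ < δ) (hZ : |Z| ≤ 1)
    (hy : y + κ * corrector γ Z y φ ∈ Ioo (-1 + δ) (1 - δ)) :
    |2 * κ * Z * (y / √(1 - y ^ 2)) * cos φ| ≤ 2 * κ / δ := by
  have hδ : 0 < δ := by linarith
  have hr : 0 ≤ √(1 - y ^ 2) := sqrt_nonneg _
  have he : |κ * corrector γ Z y φ| ≤ δ * √(1 - y ^ 2) := by
    rw [abs_mul, abs_of_pos hκ]
    nlinarith [abs_corrector_le γ φ (y := y) hZ]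
  have hq : |y / √(1 - y ^ 2)| ≤ δ⁻¹ := by
    rw [abs_div, abs_of_nonneg hr]
    rcases hr.eq_or_lt with h | h
    · rw [← h, _root_.div_zero]
      positivity
    · rw [div_le_iff₀ h, inv_mul_eq_div, le_div_iff₀ hδ, mul_comm]
      exact mul_abs_le_sqrt_one_sub_sq hδ he hy
  calc |2 * κ * Z * (y / √(1 - y ^ 2)) * cos φ|
      = 2 * κ * |Z| * |y / √(1 - y ^ 2)| * |cos φ| := by
        rw [abs_mul, abs_mul, abs_mul, abs_of_pos (by positivity : 0 < 2 * κ)]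
    _ ≤ 2 * κ * 1 * δ⁻¹ * 1 := by
        gcongr
        exact abs_cos_le_one φ
    _ = 2 * κ / δ := by ring

theorem clock_time_estimate_general
    (γ κ δ φstar : ℝ)
    (hκpos : 0 < κ) (hκ : κ < δ / 2)
    (Z y φp : ℝ → ℝ)
    (hφ : ∀ t, HasDerivAt φp
      (1 - 2 * κ * Z t * (y t / Real.sqrt (1 - y t ^ 2)) * Real.cos (φp t)) t)
    (ybar : ℝ → ℝ)
    (hybar : ∀ t, ybar t = y t +
      κ * (2 * Z t / (1 + γ ^ 2) * Real.sqrt (1 - y t ^ 2) *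
        (Real.cos (φp t) + γ * Real.sin (φp t))))
    (hx₀ : |Z 0| < 1 ∧ ybar 0 ∈ Set.Ioo (-1 + δ) (1 - δ))
    (hφstar : φp 0 < φstar) :
    firstTime (fun t => φp t = φstar) ∈
      Set.Icc (ENNReal.ofReal ((φstar - φp 0) / (1 + 2 * κ / δ)))
              (ENNReal.ofReal ((φstar - φp 0) / (1 - 2 * κ / δ))) ∪
      Set.Ici (firstTime (fun t => ¬(|Z t| < 1 ∧ ybar t ∈ Set.Ioo (-1 + δ) (1 - δ)))) := by
  have hδ : 0 < δ := by linarith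
  have hslow : 0 < 1 - 2 * κ / δ := by
    rw [sub_pos, div_lt_one hδ]
    linarith
  refine firstTime_eq_mem_of_hasDerivAt_mem_Icc hφ hslow (fun t ⟨hZ, hy⟩ => ?_) hx₀ hφstar
  have hdrift := abs_le.1 <| abs_clockDrift_le (γ := γ) hκpos (by linarith) hZ.le (hybar t ▸ hy)
  constructor <;> linarith [hdrift.1, hdrift.2]

/-- Lemma on the clock variable `φ_t`: as long as the process stays in
`D_{(−1+δ,1−δ)}`, `φ` moves with speed in `[1 − 2κ/δ, 1 + 2κ/δ]`, so the first
time `τ_{φ*}` when `φ_t = φ*` lies in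
`[(φ*−φ₀)/(1+2κ/δ), (φ*−φ₀)/(1−2κ/δ)] ∪ [τ_{(−1+δ,1−δ)}, ∞]`. -/
theorem clock_time_estimate
    (γ κ δ φstar : ℝ) (hγ : 0 < γ) (hδ : 0 < δ) (hδ1 : δ < 1)
    (hκpos : 0 < κ) (hκ : κ < δ / 2)
    (Z y φp : ℝ → ℝ) (hZc : Continuous Z)
    (hy : ∀ t, HasDerivAt y
      (2 * κ * Z t * Real.sqrt (1 - y t ^ 2) * Real.sin (φp t)) t)
    (hφ : ∀ t, HasDerivAt φp
      (1 - 2 * κ * Z t * (y t / Real.sqrt (1 - y t ^ 2)) * Real.cos (φp t)) t)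
    (hybd : ∀ t, y t ∈ Set.Icc (-1 : ℝ) 1)
    (ybar : ℝ → ℝ)
    (hybar : ∀ t, ybar t = y t +
      κ * (2 * Z t / (1 + γ ^ 2) * Real.sqrt (1 - y t ^ 2) *
        (Real.cos (φp t) + γ * Real.sin (φp t))))
    (hx₀ : |Z 0| < 1 ∧ ybar 0 ∈ Set.Ioo (-1 + δ) (1 - δ))
    (hφstar : φp 0 < φstar) :
    firstTime (fun t => φp t = φstar) ∈
      Set.Icc (ENNReal.ofReal ((φstar - φp 0) / (1 + 2 * κ / δ)))
              (ENNReal.ofReal ((φstar - φp 0) / (1 - 2 * κ / δ))) ∪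
      Set.Ici (firstTime (fun t => ¬(|Z t| < 1 ∧ ybar t ∈ Set.Ioo (-1 + δ) (1 - δ)))) :=
  clock_time_estimate_general γ κ δ φstar hκpos hκ Z y φp hφ ybar hybar hx₀ hφstar

end
end
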